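/- Concatenation argument for CR-sets: Let (S,+) be a commutative semigroup, A ⊆ S a CR-set, n, l ∈ ℕ, and let r witness the CR property of A for ln columns. Then for every r × n matrix M' over S × S, writing M'_{ij} = (M¹_{ij}, M²_{ij}), and every s ∈ S, there exist a ∈ S and a nonempty α ⊆ {1,…,r} such that for all j ∈ {1,…,n} and all k ∈ {0,1,…,l-1}: a + ∑_{i∈α} M¹_{ij} + k·(|α|·s + ∑_{i∈α} M²_{ij}) ∈ A. -/
import Mathlib


/-- Sum of `f` over a nonempty finite set `α` in a commutative semigroup. -/
def sgSum {ι S : Type*} [LinearOrder ι] [AddCommSemigroup S]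
    (α : Finset ι) (f : ι → S) (h : α.Nonempty) : S :=
  ((α.erase (α.min' h)).sort (· ≤ ·)).foldl (fun x i => x + f i) (f (α.min' h))

/-- `A` is a J-set: for every finite set of sequences there are `a` and a
nonempty finite `H ⊆ ℕ` with `a + ∑_{n ∈ H} f n ∈ A` for each `f`. -/
def JSet {S : Type*} [AddCommSemigroup S] (A : Set S) : Prop :=
  ∀ F : Finset (ℕ → S), ∃ (a : S) (H : Finset ℕ) (hH : H.Nonempty),
    ∀ f ∈ F, a + sgSum H f hH ∈ A

/-- `A` is thick: every finite set can be shifted into `A`. -/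
def Thick {S : Type*} [AddCommSemigroup S] (A : Set S) : Prop :=
  ∀ E : Finset S, ∃ x : S, ∀ e ∈ E, e + x ∈ A

/-- `A` is syndetic: finitely many shifts `-t + A` cover `S`. -/
def Syndetic {S : Type*} [AddCommSemigroup S] (A : Set S) : Prop :=
  ∃ F : Finset S, ∀ x : S, ∃ t ∈ F, t + x ∈ A

/-- `A` is piecewise syndetic: finitely many shifts `-t + A` form a thick set. -/
def PiecewiseSyndetic {S : Type*} [AddCommSemigroup S] (A : Set S) : Prop :=
  ∃ F : Finset S, Thick {x : S | ∃ t ∈ F, t + x ∈ A}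

/-- `A` is a combinatorially rich (CR) set. -/
def CRSet {S : Type*} [AddCommSemigroup S] (A : Set S) : Prop :=
  ∀ n : ℕ, ∃ r : ℕ, ∀ M : Fin r → Fin n → S,
    ∃ (α : Finset (Fin r)) (hα : α.Nonempty) (s : S),
      ∀ j : Fin n, s + sgSum α (fun i => M i j) hα ∈ A

/-- `iterAdd a b k = a + b + ⋯ + b` (`k` copies of `b`). -/
def iterAdd {S : Type*} [AddSemigroup S] (a b : S) : ℕ → S
  | 0 => a
  | k + 1 => iterAdd a b k + b

/-- `posSmul m s = s + ⋯ + s` (`m` copies of `s`, for `m ≥ 1`). -/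
def posSmul {S : Type*} [AddSemigroup S] (m : ℕ) (s : S) : S :=
  iterAdd s s (m - 1)

section Aux
variable {ι S : Type*} [LinearOrder ι] [AddCommSemigroup S]

lemma foldl_add_add (f g : ι → S) (L : List ι) :
    ∀ a b : S, L.foldl (fun x i => x + (f i + g i)) (a + b)
      = L.foldl (fun x i => x + f i) a + L.foldl (fun x i => x + g i) b := by
  induction L with
  | nil => intro a b; simp
  | cons i L ih =>
      intro a b
      simp only [List.foldl_cons]
      rw [← ih (a + f i) (b + g i), add_add_add_comm]

lemma sgSum_add (α : Finset ι) (f g : ι → S) (h : α.Nonempty) :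
    sgSum α (fun i => f i + g i) h = sgSum α f h + sgSum α g h := by
  unfold sgSum
  exact foldl_add_add f g _ _ _

lemma iterAdd_succ' (a b : S) (k : ℕ) :
    iterAdd a b (k + 1) = iterAdd (a + b) b k := by
  induction k with
  | zero => rfl
  | succ k ih => show iterAdd a b (k+1) + b = _; rw [ih]; rfl

lemma foldl_const (s : S) (L : List ι) :
    ∀ a : S, L.foldl (fun x _ => x + s) a = iterAdd a s L.length := by
  induction L with
  | nil => intro a; rfl
  | cons i L ih =>
      intro a
      simp only [List.foldl_cons, List.length_cons]
      rw [ih (a + s), iterAdd_succ']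

lemma sgSum_const (α : Finset ι) (s : S) (h : α.Nonempty) :
    sgSum α (fun _ => s) h = posSmul α.card s := by
  unfold sgSum posSmul
  rw [foldl_const, Finset.length_sort, Finset.card_erase_of_mem (α.min'_mem h)]

lemma add_iterAdd (a b c : S) (k : ℕ) :
    a + iterAdd b c k = iterAdd (a + b) c k := by
  induction k with
  | zero => rfl
  | succ k ih => show a + (iterAdd b c k + c) = iterAdd (a+b) c k + c
                 rw [← add_assoc, ih]

lemma sgSum_iterAdd (α : Finset ι) (f g : ι → S) (h : α.Nonempty) (k : ℕ) :
    sgSum α (fun i => iterAdd (f i) (g i) k) h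
      = iterAdd (sgSum α f h) (sgSum α g h) k := by
  induction k with
  | zero => rfl
  | succ k ih =>
      show sgSum α (fun i => iterAdd (f i) (g i) k + g i) h = _
      rw [sgSum_add α _ g h, ih]; rfl

end Aux

/-- Concatenation argument for CR-sets: if `A` is a CR-set and `r` witnesses the
CR property of `A` for `l * n` columns, then for every `r × n` matrix `M'` over
`S × S` with entries `(M¹_{ij}, M²_{ij})` and every `s ∈ S` there are `a ∈ S`
and a nonempty `α ⊆ {1,…,r}` such that for all `j` and all `k ∈ {0,…,l-1}`,
`a + ∑_{i∈α} M¹_{ij} + k·(|α|·s + ∑_{i∈α} M²_{ij}) ∈ A`. -/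
theorem cRSet_concatenation {S : Type*} [AddCommSemigroup S] (A : Set S)
    (hA : CRSet A) (n l r : ℕ)
    (hr : ∀ M : Fin r → Fin (l * n) → S,
      ∃ (α : Finset (Fin r)) (hα : α.Nonempty) (a : S),
        ∀ j : Fin (l * n), a + sgSum α (fun i => M i j) hα ∈ A) :
    ∀ M' : Fin r → Fin n → S × S, ∀ s : S,
      ∃ (a : S) (α : Finset (Fin r)) (hα : α.Nonempty),
        ∀ j : Fin n, ∀ k : ℕ, k < l →
          iterAdd (a + sgSum α (fun i => (M' i j).1) hα)
            (posSmul α.card s + sgSum α (fun i => (M' i j).2) hα) k ∈ A := by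
  intro M' s
  rcases Nat.eq_zero_or_pos n with hn | hn
  · obtain ⟨α, hα, a, -⟩ := hr (fun _ _ => s)
    exact ⟨a, α, hα, fun j => absurd j.2 (by omega)⟩
  rcases Nat.eq_zero_or_pos l with hl | hl
  · obtain ⟨α, hα, a, -⟩ := hr (fun _ _ => s)
    exact ⟨a, α, hα, fun j k hk => absurd hk (by omega)⟩
  obtain ⟨α, hα, a, ha⟩ := hr (fun i m =>
    iterAdd (M' i ⟨m.1 % n, Nat.mod_lt _ hn⟩).1
      (s + (M' i ⟨m.1 % n, Nat.mod_lt _ hn⟩).2) (m.1 / n))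
  refine ⟨a, α, hα, fun j k hk => ?_⟩
  have hm : k * n + j.1 < l * n := by
    have hj := j.2
    calc k * n + j.1 < k * n + n := by omega
    _ = (k + 1) * n := by ring
    _ ≤ l * n := Nat.mul_le_mul_right n (by omega)
  have h1 : (k * n + j.1) % n = j.1 := by
    rw [Nat.add_comm, Nat.add_mul_mod_self_right, Nat.mod_eq_of_lt j.2]
  have h2 : (k * n + j.1) / n = k := by
    rw [Nat.add_comm, Nat.add_mul_div_right _ _ hn, Nat.div_eq_of_lt j.2, Nat.zero_add]
  have := ha ⟨k * n + j.1, hm⟩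
  simp only [h1, h2, Fin.eta] at this
  rwa [sgSum_iterAdd, sgSum_add α (fun _ => s) (fun i => (M' i j).2) hα,
    sgSum_const, add_iterAdd] at this
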